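/- Asymptotic behavior of the finite-horizon value functions without discount: let g : I → ℝ, let γ ∈ ℝ and (ξ_i)_{i∈I} solve the ergodic equation −γ + H(i, (ξ_j − ξ_i)_{j∈V(i)}) = 0 for all i ∈ I. For each T > 0 let V^T = (V^T_i)_{i∈I} be the continuously differentiable solution on (−∞,T] of (d/dt)V^T_i(t) + H(i, (V^T_j(t) − V^T_i(t))_{j∈V(i)}) = 0 with terminal condition V^T_i(T) = g(i). Then there exists a constant q_∞ ∈ ℝ (namely q_∞ = inf_{s ≥ 0} max_{i∈I} (V^{s}_i(0) − γ s − ξ_i)) such that for every i ∈ I and every fixed t ≥ 0: V^T_i(t) − γ(T − t) → ξ_i + q_∞ as T → +∞; equivalently V^T_i(t) = γ(T−t) + ξ_i + q_∞ + o(1) as T → +∞. -/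

import Mathlib

open Set Filter Topology

namespace FHA

variable {N : ℕ} {V : Fin N → Finset (Fin N)} {H : (i : Fin N) → (↥(V i) → ℝ) → ℝ}

lemma comp (hne : (Finset.univ : Finset (Fin N)).Nonempty)
    (hmono : ∀ (i : Fin N) (p p' : ↥(V i) → ℝ), (∀ j, p' j ≤ p j) → H i p' ≤ H i p)
    {b : ℝ} {Y Z : Fin N → ℝ → ℝ}
    (hY : ∀ i, ∀ t ∈ Iic b, HasDerivWithinAt (Y i) (-(H i fun j => Y j.1 t - Y i t)) (Iic b) t)
    (hZ : ∀ i, ∀ t ∈ Iic b, HasDerivWithinAt (Z i) (-(H i fun j => Z j.1 t - Z i t)) (Iic b) t)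
    {a : ℝ} (hab : a ≤ b) :
    (Finset.univ.sup' hne fun i => Y i a - Z i a) ≤
      Finset.univ.sup' hne fun i => Y i b - Z i b := by
  set f : Fin N → ℝ → ℝ := fun i t => Y i t - Z i t with hfdef
  have hcont : ∀ i, ContinuousOn (f i) (Iic b) := fun i t ht =>
    ((hY i t ht).sub (hZ i t ht)).continuousWithinAt
  have key : ∀ ε > (0:ℝ),
      (Finset.univ.sup' hne fun i => f i a) + ε * a ≤
        (Finset.univ.sup' hne fun i => f i b) + ε * b := by
    intro ε hε
    set Φ : ℝ → ℝ := fun t => (Finset.univ.sup' hne fun i => f i t) + ε * t with hΦdef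
    have hΦcont : ContinuousOn Φ (Icc a b) := by
      apply ContinuousOn.add
      · exact ContinuousOn.finset_sup'_apply hne
          (fun i _ => (hcont i).mono Icc_subset_Iic_self)
      · exact (continuous_const.mul continuous_id).continuousOn
    obtain ⟨c, hc, hcmax⟩ := isCompact_Icc.exists_isMaxOn ⟨a, left_mem_Icc.2 hab⟩ hΦcont
    rcases eq_or_lt_of_le hc.2 with hcb | hcb
    · have := hcmax (left_mem_Icc.2 hab)
      simpa [hΦdef, hcb] using this
    · exfalso
      obtain ⟨i, -, hi⟩ := Finset.exists_mem_eq_sup' hne fun i => f i c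
      have hcIic : c ∈ Iic b := le_of_lt hcb
      have hd : HasDerivWithinAt (f i)
          (-(H i fun j => Y j.1 c - Y i c) - -(H i fun j => Z j.1 c - Z i c)) (Iic b) c :=
        (hY i c hcIic).sub (hZ i c hcIic)
      have hd' := hd.mono (Ioc_subset_Iic_self : Ioc c b ⊆ Iic b)
      have hslope : ∀ t ∈ Ioc c b, slope (f i) c t ≤ -ε := by
        intro t ht
        have h1 : f i t ≤ Finset.univ.sup' hne fun j => f j t :=
          Finset.le_sup' (fun j => f j t) (Finset.mem_univ i)
        have h2 : Φ t ≤ Φ c := hcmax ⟨le_trans hc.1 ht.1.le, ht.2⟩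
        have h3 : (Finset.univ.sup' hne fun j => f j c) = f i c := hi
        have h4 : 0 < t - c := by linarith [ht.1]
        rw [slope_def_field, div_le_iff₀ h4]
        simp only [hΦdef, h3] at h2
        nlinarith
      have hner : (𝓝[Ioc c b \ {c}] c).NeBot := by
        rw [diff_singleton_eq_self (by simp)]
        rw [nhdsWithin_Ioc_eq_nhdsGT hcb]
        exact nhdsGT_neBot c
      have hle : (-(H i fun j => Y j.1 c - Y i c) - -(H i fun j => Z j.1 c - Z i c)) ≤ -ε := by
        refine le_of_tendsto (hasDerivWithinAt_iff_tendsto_slope.mp hd') ?_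
        exact eventually_nhdsWithin_of_forall fun t ht => hslope t ht.1
      have hge : H i (fun j => Y j.1 c - Y i c) ≤ H i fun j => Z j.1 c - Z i c := by
        apply hmono
        intro j
        have : f j.1 c ≤ f i c := hi ▸ Finset.le_sup' (fun k => f k c) (Finset.mem_univ j.1)
        simp only [hfdef] at this ⊢
        linarith
      linarith
  by_contra hlt
  push_neg at hlt
  set A := Finset.univ.sup' hne fun i => f i a
  set B := Finset.univ.sup' hne fun i => f i b
  have hBA : 0 < A - B := by simp only [A, B]; linarith
  have hba : 0 ≤ b - a := by linarith
  have := key ((A - B) / (b - a + 1)) (by positivity)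
  have h2 : (A - B) / (b - a + 1) * (b - a) < A - B := by
    rw [div_mul_eq_mul_div, div_lt_iff₀ (by linarith)]
    nlinarith
  nlinarith

lemma sol_restrict {b b' : ℝ} (hb : b' ≤ b) {Y : Fin N → ℝ → ℝ}
    (hY : ∀ i, ∀ t ∈ Iic b, HasDerivWithinAt (Y i) (-(H i fun j => Y j.1 t - Y i t)) (Iic b) t) :
    ∀ i, ∀ t ∈ Iic b', HasDerivWithinAt (Y i) (-(H i fun j => Y j.1 t - Y i t)) (Iic b') t :=
  fun i t ht => (hY i t (le_trans ht hb)).mono (Iic_subset_Iic.2 hb)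

lemma sol_shift {b : ℝ} {Y : Fin N → ℝ → ℝ}
    (hY : ∀ i, ∀ t ∈ Iic b, HasDerivWithinAt (Y i) (-(H i fun j => Y j.1 t - Y i t)) (Iic b) t)
    (Δ : ℝ) :
    ∀ i, ∀ t ∈ Iic (b + Δ), HasDerivWithinAt (fun s => Y i (s - Δ))
      (-(H i fun j => Y j.1 (t - Δ) - Y i (t - Δ))) (Iic (b + Δ)) t := by
  intro i t ht
  have hmem : t - Δ ∈ Iic b := by simp only [mem_Iic] at ht ⊢; linarith
  have hinner : HasDerivWithinAt (fun s : ℝ => s - Δ) 1 (Iic (b + Δ)) t := by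
    simpa using (hasDerivWithinAt_id t (Iic (b + Δ))).sub_const Δ
  have hmaps : MapsTo (fun s : ℝ => s - Δ) (Iic (b + Δ)) (Iic b) := by
    intro s hs; simp only [mem_Iic] at hs ⊢; linarith
  have := (hY i (t - Δ) hmem).comp t hinner hmaps
  rw [mul_one] at this
  exact this

lemma sol_xi {γ : ℝ} {ξ : Fin N → ℝ}
    (hergo : ∀ i, -γ + H i (fun j => ξ j.1 - ξ i) = 0) (b d c : ℝ) :
    ∀ i, ∀ t ∈ Iic b, HasDerivWithinAt (fun s => ξ i + γ * (d - s) + c)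
      (-(H i fun j => (ξ j.1 + γ * (d - t) + c) - (ξ i + γ * (d - t) + c))) (Iic b) t := by
  intro i t ht
  have harg : (fun j : ↥(V i) => (ξ j.1 + γ * (d - t) + c) - (ξ i + γ * (d - t) + c)) =
      fun j => ξ j.1 - ξ i := by funext j; ring
  rw [harg]
  have hH : H i (fun j => ξ j.1 - ξ i) = γ := by linarith [hergo i]
  rw [hH]
  have : HasDerivWithinAt (fun s : ℝ => ξ i + γ * (d - s) + c) (-γ) (Iic b) t := by
    have h1 : HasDerivWithinAt (fun s : ℝ => d - s) (-1) (Iic b) t := by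
      simpa using (hasDerivWithinAt_id t (Iic b)).const_sub d
    have h2 := ((h1.const_mul γ).const_add (ξ i)).add_const c
    simpa using h2
  exact this

lemma edge_lemma (hne : (Finset.univ : Finset (Fin N)).Nonempty)
    (hmono : ∀ (i : Fin N) (p p' : ↥(V i) → ℝ), (∀ j, p' j ≤ p j) → H i p' ≤ H i p)
    (hstrict : ∀ (i : Fin N) (p p' : ↥(V i) → ℝ),
      (∀ j, p' j ≤ p j) → (∃ k, p' k < p k) → H i p' < H i p)
    (hlip : ∀ i, LocallyLipschitz (H i))
    {γ : ℝ} {ξ : Fin N → ℝ}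
    (hergo : ∀ i, -γ + H i (fun j => ξ j.1 - ξ i) = 0)
    {α : ℝ} (hα : 0 < α) :
    ∃ ε θ : ℝ, 0 < ε ∧ ε ≤ α/4 ∧ 0 < θ ∧ ∀ (j i : Fin N) (hij : i ∈ V j),
      ∀ p : ↥(V j) → ℝ, (∀ k, p k ≤ ξ k.1 - ξ j + ε) → p ⟨i, hij⟩ ≤ ξ i - ξ j - α/4 →
      H j p ≤ γ - θ := by
  have hpair : ∀ ji : Fin N × Fin N, ∃ εθ : ℝ × ℝ, 0 < εθ.1 ∧ εθ.1 ≤ α/4 ∧ 0 < εθ.2 ∧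
      ∀ _ : ji.2 ∈ V ji.1,
        H ji.1 (fun k => ξ k.1 - ξ ji.1 + if k.1 = ji.2 then -(α/4) else εθ.1) ≤ γ - εθ.2 := by
    rintro ⟨j, i⟩
    by_cases hij : i ∈ V j
    · set φ : ℝ → ℝ :=
        fun e => H j (fun k => ξ k.1 - ξ j + if k.1 = i then -(α/4) else e) with hφdef
      have hφc : Continuous φ := by
        apply (hlip j).continuous.comp
        apply continuous_pi
        intro k
        by_cases hk : k.1 = i
        · simp only [hk, if_true]; exact continuous_const
        · simp only [hk, if_false]; exact continuous_const.add continuous_id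
      have hφ0 : φ 0 < γ := by
        have h1 : H j (fun k => ξ k.1 - ξ j + if k.1 = i then -(α/4) else 0) <
            H j (fun k => ξ k.1 - ξ j) := by
          apply hstrict
          · intro k; by_cases hk : k.1 = i <;> simp [hk] <;> linarith
          · refine ⟨⟨i, hij⟩, ?_⟩; simp; linarith
        have h2 : H j (fun k : ↥(V j) => ξ k.1 - ξ j) = γ := by linarith [hergo j]
        simp only [hφdef]
        linarith
      have hev : ∀ᶠ e in 𝓝 (0:ℝ), φ e < γ :=
        hφc.continuousAt.eventually_lt continuousAt_const hφ0
      obtain ⟨d, hd, hball⟩ := Metric.eventually_nhds_iff.mp hev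
      set e := min (d/2) (α/4) with hedef
      have he1 : 0 < e := lt_min (by linarith) (by linarith)
      have he2 : φ e < γ := by
        apply hball
        rw [Real.dist_eq]
        have : |e - 0| = e := by rw [sub_zero, abs_of_pos he1]
        rw [this]
        calc e ≤ d/2 := min_le_left _ _
          _ < d := by linarith
      exact ⟨(e, γ - φ e), he1, min_le_right _ _, by show (0:ℝ) < γ - φ e; linarith, fun _ => by simp only [hφdef]; show H j _ ≤ γ - (γ - φ e); linarith⟩
    · exact ⟨(α/4, 1), by linarith, le_refl _, one_pos, fun h => absurd h hij⟩
  choose F hF using hpair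
  have hneP : (Finset.univ : Finset (Fin N × Fin N)).Nonempty := by
    obtain ⟨i0, -⟩ := hne
    exact ⟨(i0, i0), Finset.mem_univ _⟩
  refine ⟨Finset.univ.inf' hneP (fun ji => (F ji).1), Finset.univ.inf' hneP (fun ji => (F ji).2),
    ?_, ?_, ?_, ?_⟩
  · rw [Finset.lt_inf'_iff]; exact fun ji _ => (hF ji).1
  · obtain ⟨ji0, -⟩ := hneP
    exact le_trans (Finset.inf'_le _ (Finset.mem_univ ji0)) (hF ji0).2.1
  · rw [Finset.lt_inf'_iff]; exact fun ji _ => (hF ji).2.2.1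
  · intro j i hij p hp hdip
    have h1 : H j p ≤ H j (fun k => ξ k.1 - ξ j + if k.1 = i then -(α/4) else (F (j,i)).1) := by
      apply hmono
      intro k
      by_cases hk : k.1 = i
      · have hki : k = ⟨i, hij⟩ := Subtype.ext hk
        rw [hki]
        simp only [if_true]
        have : ξ (⟨i, hij⟩ : ↥(V j)).1 = ξ i := rfl
        rw [this]
        linarith [hdip]
      · simp only [hk, if_false]
        calc p k ≤ ξ k.1 - ξ j + Finset.univ.inf' hneP (fun ji => (F ji).1) := hp k
          _ ≤ ξ k.1 - ξ j + (F (j,i)).1 := by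
              gcongr; exact Finset.inf'_le _ (Finset.mem_univ _)
    calc H j p ≤ γ - (F (j,i)).2 := le_trans h1 ((hF (j,i)).2.2.2 hij)
      _ ≤ γ - Finset.univ.inf' hneP (fun ji => (F ji).2) := by
          gcongr; exact Finset.inf'_le _ (Finset.mem_univ _)

set_option maxHeartbeats 1000000 in
lemma spread_decay (hne : (Finset.univ : Finset (Fin N)).Nonempty)
    (hmono : ∀ (i : Fin N) (p p' : ↥(V i) → ℝ), (∀ j, p' j ≤ p j) → H i p' ≤ H i p)
    (hstrict : ∀ (i : Fin N) (p p' : ↥(V i) → ℝ),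
      (∀ j, p' j ≤ p j) → (∃ k, p' k < p k) → H i p' < H i p)
    (hlip : ∀ i, LocallyLipschitz (H i))
    (hconn : ∀ i j : Fin N, Relation.ReflTransGen (fun a c => c ∈ V a) i j)
    {γ : ℝ} {ξ : Fin N → ℝ}
    (hergo : ∀ i, -γ + H i (fun j => ξ j.1 - ξ i) = 0)
    {u : Fin N → ℝ → ℝ} {b : ℝ}
    (hu : ∀ i, ∀ t ∈ Iic b, HasDerivWithinAt (u i)
      (γ - H i fun j => u j.1 t - u i t + (ξ j.1 - ξ i)) (Iic b) t)
    {C1 C2 : ℝ} (hbox : ∀ i, ∀ t ∈ Iic b, u i t ∈ Icc C1 C2)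
    (hM : ∀ t1 t2 : ℝ, t1 ≤ t2 → t2 ≤ b →
      (Finset.univ.sup' hne fun i => u i t1) ≤ Finset.univ.sup' hne fun i => u i t2)
    {δ : ℝ} (hδ : 0 < δ) :
    ∃ τ > 0, ∃ η > 0, ∀ t0 ≤ b, ∀ i0 : Fin N,
      u i0 t0 ≤ (Finset.univ.sup' hne fun i => u i t0) - δ →
      (Finset.univ.sup' hne fun i => u i (t0 - τ)) ≤
        (Finset.univ.sup' hne fun i => u i t0) - η := by
  classical
  set M : ℝ → ℝ := fun t => Finset.univ.sup' hne fun i => u i t with hMdef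
  obtain ⟨iw, -⟩ := id hne
  -- bound on ξ differences
  set Ξ : ℝ := Finset.univ.sup' hne fun i => |ξ i| with hΞdef
  have hΞi : ∀ i, |ξ i| ≤ Ξ := fun i => Finset.le_sup' (fun i => |ξ i|) (Finset.mem_univ i)
  have hC12 : C1 ≤ C2 := by
    have := hbox iw b self_mem_Iic
    exact le_trans this.1 this.2
  have hΞ0 : 0 ≤ Ξ := le_trans (abs_nonneg _) (hΞi iw)
  set R : ℝ := (C2 - C1) + 2 * Ξ with hRdef
  have hR0 : 0 ≤ R := by simp only [hRdef]; linarith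
  -- bound on H on the relevant compact set
  have hHbound : ∀ i : Fin N, ∃ C, ∀ p : ↥(V i) → ℝ, ‖p‖ ≤ R → |H i p| ≤ C := by
    intro i
    obtain ⟨C, hC⟩ := (isCompact_closedBall (0 : ↥(V i) → ℝ) R).exists_bound_of_continuousOn
      (hlip i).continuous.continuousOn
    refine ⟨C, fun p hp => ?_⟩
    have := hC p (by simpa [mem_closedBall_zero_iff] using hp)
    simpa [Real.norm_eq_abs] using this
  choose CH hCH using hHbound
  set K0 : ℝ := |γ| + (Finset.univ.sup' hne CH) + 1 with hK0def
  have hCHnn : ∀ i, 0 ≤ CH i := fun i =>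
    le_trans (abs_nonneg _) (hCH i 0 (by simp [hR0]))
  have hK0pos : 0 < K0 := by
    have h1 : CH iw ≤ Finset.univ.sup' hne CH := Finset.le_sup' CH (Finset.mem_univ iw)
    have := hCHnn iw
    simp only [hK0def]
    have := abs_nonneg γ
    linarith
  -- the p-vector is in the ball
  have hpball : ∀ i : Fin N, ∀ t ∈ Iic b,
      ‖(fun j : ↥(V i) => u j.1 t - u i t + (ξ j.1 - ξ i))‖ ≤ R := by
    intro i t ht
    rw [pi_norm_le_iff_of_nonneg hR0]
    intro j
    have h1 := hbox j.1 t ht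
    have h2 := hbox i t ht
    have h3 := abs_le.1 (hΞi j.1)
    have h4 := abs_le.1 (hΞi i)
    rw [Real.norm_eq_abs, abs_le]
    constructor <;> simp only [hRdef] <;>
      [linarith [h1.1, h2.2, h3.1, h4.2]; linarith [h1.2, h2.1, h3.2, h4.1]]
  have hdbound : ∀ i : Fin N, ∀ t ∈ Iic b,
      ‖γ - H i (fun j : ↥(V i) => u j.1 t - u i t + (ξ j.1 - ξ i))‖ ≤ K0 := by
    intro i t ht
    have h1 := hCH i _ (hpball i t ht)
    have h2 : CH i ≤ Finset.univ.sup' hne CH := Finset.le_sup' CH (Finset.mem_univ i)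
    rw [Real.norm_eq_abs]
    calc |γ - H i _| ≤ |γ| + |H i _| := abs_sub _ _
      _ ≤ K0 := by simp only [hK0def]; linarith
  have hlipu : ∀ i : Fin N, ∀ t1 ∈ Iic b, ∀ t2 ∈ Iic b,
      |u i t1 - u i t2| ≤ K0 * |t1 - t2| := by
    intro i t1 h1 t2 h2
    have := Convex.norm_image_sub_le_of_norm_hasDerivWithin_le
      (f := u i) (f' := fun t => γ - H i fun j : ↥(V i) => u j.1 t - u i t + (ξ j.1 - ξ i))
      (s := Iic b) (fun x hx => hu i x hx) (fun x hx => hdbound i x hx) (convex_Iic b) h2 h1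
    simpa [Real.norm_eq_abs] using this
  -- continuity of u on Iic b
  have hucont : ∀ i : Fin N, ContinuousOn (u i) (Iic b) := fun i t ht =>
    (hu i t ht).continuousWithinAt
  -- global continuous modification
  have hwcont : ∀ i : Fin N, Continuous (fun t => u i (min t b)) := by
    intro i
    exact (hucont i).comp_continuous (continuous_id.min continuous_const)
      (fun t => min_le_right t b)
  -- One-step propagation
  have Q : ∀ α : ℝ, 0 < α → ∃ σ : ℝ, 0 < σ ∧ ∃ β : ℝ, 0 < β ∧ β ≤ α ∧
      ∀ t1 ≤ b, ∀ B : ℝ, M t1 ≤ B → ∀ i : Fin N, u i t1 ≤ B - α →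
      ∀ j : Fin N, (j = i ∨ i ∈ V j) → u j (t1 - σ) ≤ B - β := by
    intro α hα
    obtain ⟨ε, θ, hε, hεα, hθ, hedge⟩ := edge_lemma hne hmono hstrict hlip hergo hα
    set σ : ℝ := α / (2 * K0) with hσdef
    have hσ : 0 < σ := by positivity
    have hK0σ : K0 * σ = α / 2 := by
      rw [hσdef]; field_simp
    refine ⟨σ, hσ, min ε (θ * σ), lt_min hε (by positivity), ?_, ?_⟩
    · calc min ε (θ*σ) ≤ ε := min_le_left _ _
        _ ≤ α/4 := hεα
        _ ≤ α := by linarith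
    intro t1 ht1 B hB i hui j hj
    have hpers : ∀ t ∈ Icc (t1 - σ) t1, u i t ≤ B - α/2 := by
      intro t ht
      have h1 := hlipu i t (le_trans ht.2 ht1) t1 ht1
      have h2 : |t - t1| ≤ σ := abs_le.2 ⟨by linarith [ht.1], by linarith [ht.2]⟩
      have h3 : u i t - u i t1 ≤ K0 * σ := by
        calc u i t - u i t1 ≤ |u i t - u i t1| := le_abs_self _
          _ ≤ K0 * |t - t1| := h1
          _ ≤ K0 * σ := by nlinarith
      rw [hK0σ] at h3
      linarith
    rcases hj with rfl | hij
    · have h5 := hpers (t1 - σ) (left_mem_Icc.2 (by linarith))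
      have h7 : min ε (θ*σ) ≤ α/2 := le_trans (min_le_left _ _) (by linarith)
      linarith
    · have hMt : ∀ t ∈ Icc (t1 - σ) t1, M t ≤ B := fun t ht => le_trans (hM t t1 ht.2 ht1) hB
      have hderiv : ∀ t ∈ Icc (t1 - σ) t1, B - ε ≤ u j t →
          θ ≤ γ - H j (fun k : ↥(V j) => u k.1 t - u j t + (ξ k.1 - ξ j)) := by
        intro t ht hlow
        have h1 : H j (fun k : ↥(V j) => u k.1 t - u j t + (ξ k.1 - ξ j)) ≤ γ - θ := by
          apply hedge j i hij
          · intro k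
            have hk1 : u k.1 t ≤ M t := Finset.le_sup' (fun i => u i t) (Finset.mem_univ k.1)
            have hk2 := hMt t ht
            linarith
          · have h5 := hpers t ht
            show u i t - u j t + (ξ i - ξ j) ≤ ξ i - ξ j - α/4
            linarith [hεα]
        linarith
      by_cases hall : ∀ t ∈ Icc (t1 - σ) t1, B - ε ≤ u j t
      · have hmono2 : MonotoneOn (fun t => u j t - θ * t) (Icc (t1 - σ) t1) := by
          apply monotoneOn_of_deriv_nonneg (convex_Icc _ _)
          · exact ((hucont j).mono (fun x hx => le_trans hx.2 ht1)).sub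
              (continuous_const.mul continuous_id).continuousOn
          · intro x hx
            rw [interior_Icc] at hx
            have hxb : x < b := lt_of_lt_of_le hx.2 ht1
            have hder := (hu j x (le_of_lt hxb)).hasDerivAt (Iic_mem_nhds hxb)
            have hv : HasDerivAt (fun t => u j t - θ * t)
                ((γ - H j fun k : ↥(V j) => u k.1 x - u j x + (ξ k.1 - ξ j)) - θ) x := by
              have h := hder.sub ((hasDerivAt_id x).const_mul θ); simp only [id_eq, mul_one] at h; exact h
            exact hv.differentiableAt.differentiableWithinAt
          · intro x hx
            rw [interior_Icc] at hx
            have hxb : x < b := lt_of_lt_of_le hx.2 ht1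
            have hder := (hu j x (le_of_lt hxb)).hasDerivAt (Iic_mem_nhds hxb)
            have hv : HasDerivAt (fun t => u j t - θ * t)
                ((γ - H j fun k : ↥(V j) => u k.1 x - u j x + (ξ k.1 - ξ j)) - θ) x := by
              have h := hder.sub ((hasDerivAt_id x).const_mul θ); simp only [id_eq, mul_one] at h; exact h
            rw [hv.deriv]
            have h6 := hderiv x ⟨hx.1.le, hx.2.le⟩ (hall x ⟨hx.1.le, hx.2.le⟩)
            linarith
        have h1 := hmono2 (left_mem_Icc.2 (by linarith)) (right_mem_Icc.2 (by linarith))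
          (by linarith)
        have h2 : u j t1 ≤ B := le_trans (Finset.le_sup' (fun i => u i t1) (Finset.mem_univ j)) hB
        have hβ2 : min ε (θ*σ) ≤ θ*σ := min_le_right _ _
        simp only [] at h1
        nlinarith [h1]
      · push_neg at hall
        obtain ⟨t2, ht2, hlt2⟩ := hall
        by_cases hend : u j (t1 - σ) ≤ B - ε
        · have h7 : min ε (θ*σ) ≤ ε := min_le_left _ _
          linarith
        · exfalso
          push_neg at hend
          set S : Set ℝ := {t ∈ Icc (t1 - σ) t1 | u j t ≤ B - ε} with hSdef
          have hSeq : S = Icc (t1 - σ) t1 ∩ (fun t => u j (min t b)) ⁻¹' (Iic (B - ε)) := by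
            ext t
            simp only [hSdef, mem_sep_iff, mem_inter_iff, mem_preimage, mem_Iic]
            constructor
            · rintro ⟨ht, hu'⟩
              refine ⟨ht, ?_⟩
              rw [min_eq_left (le_trans ht.2 ht1)]; exact hu'
            · rintro ⟨ht, hu'⟩
              rw [min_eq_left (le_trans ht.2 ht1)] at hu'; exact ⟨ht, hu'⟩
          have hScl : IsClosed S := by
            rw [hSeq]; exact isClosed_Icc.inter (isClosed_Iic.preimage (hwcont j))
          have hSne : S.Nonempty := ⟨t2, ht2, hlt2.le⟩
          have hSbdd : BddBelow S := ⟨t1 - σ, fun t ht => ht.1.1⟩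
          have htsS : sInf S ∈ S := hScl.csInf_mem hSne hSbdd
          set ts := sInf S with htsdef
          have hts1 : t1 - σ < ts := by
            rcases lt_or_eq_of_le htsS.1.1 with h | h
            · exact h
            · exfalso; rw [← h] at htsS; linarith [htsS.2]
          have habove : ∀ t ∈ Ico (t1 - σ) ts, B - ε < u j t := by
            intro t ht
            by_contra hc
            push_neg at hc
            have hmem : t ∈ S := ⟨⟨ht.1, le_trans ht.2.le htsS.1.2⟩, hc⟩
            have hle : ts ≤ t := csInf_le hSbdd hmem
            linarith [ht.2]
          have hmono2 : MonotoneOn (fun t => u j t - θ * t) (Icc (t1 - σ) ts) := by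
            apply monotoneOn_of_deriv_nonneg (convex_Icc _ _)
            · exact ((hucont j).mono (fun x hx => le_trans (le_trans hx.2 htsS.1.2) ht1)).sub
                (continuous_const.mul continuous_id).continuousOn
            · intro x hx
              rw [interior_Icc] at hx
              have hxb : x < b := lt_of_lt_of_le (lt_of_lt_of_le hx.2 htsS.1.2) ht1
              have hder := (hu j x (le_of_lt hxb)).hasDerivAt (Iic_mem_nhds hxb)
              have hv : HasDerivAt (fun t => u j t - θ * t)
                  ((γ - H j fun k : ↥(V j) => u k.1 x - u j x + (ξ k.1 - ξ j)) - θ) x := by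
                have h := hder.sub ((hasDerivAt_id x).const_mul θ); simp only [id_eq, mul_one] at h; exact h
              exact hv.differentiableAt.differentiableWithinAt
            · intro x hx
              rw [interior_Icc] at hx
              have hxb : x < b := lt_of_lt_of_le (lt_of_lt_of_le hx.2 htsS.1.2) ht1
              have hder := (hu j x (le_of_lt hxb)).hasDerivAt (Iic_mem_nhds hxb)
              have hv : HasDerivAt (fun t => u j t - θ * t)
                  ((γ - H j fun k : ↥(V j) => u k.1 x - u j x + (ξ k.1 - ξ j)) - θ) x := by
                have h := hder.sub ((hasDerivAt_id x).const_mul θ); simp only [id_eq, mul_one] at h; exact h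
              rw [hv.deriv]
              have hxmem : x ∈ Icc (t1 - σ) t1 := ⟨hx.1.le, le_trans hx.2.le htsS.1.2⟩
              have h6 := hderiv x hxmem (habove x ⟨hx.1.le, hx.2⟩).le
              linarith
          have h1 := hmono2 (left_mem_Icc.2 (by linarith)) (right_mem_Icc.2 (by linarith))
            (by linarith)
          have h2 := htsS.2
          simp only [] at h1
          nlinarith [h1, hts1, hθ]
  -- package the step via choice
  have hQ' : ∀ α : ℝ, 0 < α → ∃ σβ : ℝ × ℝ, 0 < σβ.1 ∧ 0 < σβ.2 ∧ σβ.2 ≤ α ∧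
      ∀ t1 ≤ b, ∀ B : ℝ, M t1 ≤ B → ∀ i : Fin N, u i t1 ≤ B - α →
      ∀ j : Fin N, (j = i ∨ i ∈ V j) → u j (t1 - σβ.1) ≤ B - σβ.2 := by
    intro α hα
    obtain ⟨σ, hσ, β, hβ, hβα, hp⟩ := Q α hα
    exact ⟨(σ, β), hσ, hβ, hβα, hp⟩
  set F : ℝ → ℝ × ℝ := fun α => if h : 0 < α then (hQ' α h).choose else (1, 1) with hFdef
  have hF : ∀ α : ℝ, 0 < α → 0 < (F α).1 ∧ 0 < (F α).2 ∧ (F α).2 ≤ α ∧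
      ∀ t1 ≤ b, ∀ B : ℝ, M t1 ≤ B → ∀ i : Fin N, u i t1 ≤ B - α →
      ∀ j : Fin N, (j = i ∨ i ∈ V j) → u j (t1 - (F α).1) ≤ B - (F α).2 := by
    intro α hα
    simp only [hFdef, dif_pos hα]
    exact (hQ' α hα).choose_spec
  set αs : ℕ → ℝ := fun k => Nat.rec δ (fun _ a => (F a).2) k with hαsdef
  have hαsS : ∀ k, αs (k + 1) = (F (αs k)).2 := fun k => rfl
  have hαs0 : αs 0 = δ := rfl
  have hαspos : ∀ k, 0 < αs k := by
    intro k
    induction k with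
    | zero => exact hδ
    | succ k ih => rw [hαsS]; exact (hF (αs k) ih).2.1
  set cs : ℕ → ℝ := fun k => ∑ l ∈ Finset.range k, (F (αs l)).1 with hcsdef
  have hcsS : ∀ k, cs (k + 1) = cs k + (F (αs k)).1 := fun k => Finset.sum_range_succ _ k
  have hcs0 : cs 0 = 0 := Finset.sum_range_zero _
  have hcsnn : ∀ k, 0 ≤ cs k := fun k =>
    Finset.sum_nonneg fun l _ => ((hF (αs l) (hαspos l)).1).le
  have hNpos : 0 < N := iw.pos
  refine ⟨cs N, ?_, αs N, hαspos N, ?_⟩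
  · simp only [hcsdef]
    exact Finset.sum_pos (fun l _ => (hF (αs l) (hαspos l)).1) ⟨0, Finset.mem_range.2 hNpos⟩
  intro t0 ht0 i0 hi0
  set Sk : ℕ → Finset (Fin N) :=
    fun k => Finset.univ.filter (fun j => u j (t0 - cs k) ≤ M t0 - αs k) with hSkdef
  have htk : ∀ k, t0 - cs k ≤ b := fun k => le_trans (by linarith [hcsnn k]) ht0
  have hMtk : ∀ k, M (t0 - cs k) ≤ M t0 := fun k => hM _ t0 (by linarith [hcsnn k]) ht0
  have hstep : ∀ k, ∀ i ∈ Sk k, ∀ j : Fin N, (j = i ∨ i ∈ V j) → j ∈ Sk (k + 1) := by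
    intro k i hik j hj
    simp only [hSkdef, Finset.mem_filter, Finset.mem_univ, true_and] at hik ⊢
    have h1 := (hF (αs k) (hαspos k)).2.2.2 (t0 - cs k) (htk k) (M t0) (hMtk k) i hik j hj
    have h2 : t0 - cs k - (F (αs k)).1 = t0 - cs (k + 1) := by rw [hcsS]; ring
    rw [h2] at h1
    rw [hαsS]
    exact h1
  have hS0 : i0 ∈ Sk 0 := by
    simp only [hSkdef, Finset.mem_filter, Finset.mem_univ, true_and, hαs0, hcs0, sub_zero]
    exact hi0
  have hsub : ∀ k, Sk k ⊆ Sk (k + 1) := fun k i hik => hstep k i hik i (Or.inl rfl)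
  have hi0k : ∀ k, i0 ∈ Sk k := by
    intro k; induction k with
    | zero => exact hS0
    | succ k ih => exact hsub k ih
  have hgrow : ∀ k, (Finset.univ : Finset (Fin N)) ⊆ Sk k ∨ k + 1 ≤ (Sk k).card := by
    intro k
    induction k with
    | zero => exact Or.inr (Finset.card_pos.2 ⟨i0, hS0⟩)
    | succ k ih =>
      rcases ih with h | h
      · exact Or.inl (h.trans (hsub k))
      · by_cases hx : (Finset.univ : Finset (Fin N)) ⊆ Sk k
        · exact Or.inl (hx.trans (hsub k))
        · right
          have hpath : ∀ x : Fin N, Relation.ReflTransGen (fun a c => c ∈ V a) x i0 →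
              x ∈ Sk k ∨ ∃ a : Fin N, a ∉ Sk k ∧ ∃ c ∈ V a, c ∈ Sk k := by
            intro x hx'
            induction hx' using Relation.ReflTransGen.head_induction_on with
            | refl => exact Or.inl (hi0k k)
            | @head a c hac hci ih2 =>
              rcases ih2 with h1 | h1
              · by_cases hmem : a ∈ Sk k
                · exact Or.inl hmem
                · exact Or.inr ⟨a, hmem, c, hac, h1⟩
              · exact Or.inr h1
          obtain ⟨j, -, hjn⟩ := Finset.not_subset.1 hx
          rcases hpath j (hconn j i0) with h1 | h1
          · exact absurd h1 hjn
          · obtain ⟨a, haN, c, hca, hcS⟩ := h1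
            have haS : a ∈ Sk (k + 1) := hstep k c hcS a (Or.inr hca)
            have hins : insert a (Sk k) ⊆ Sk (k + 1) := by
              rw [Finset.insert_subset_iff]; exact ⟨haS, hsub k⟩
            calc k + 1 + 1 ≤ (Sk k).card + 1 := by omega
              _ = (insert a (Sk k)).card := (Finset.card_insert_of_notMem haN).symm
              _ ≤ (Sk (k + 1)).card := Finset.card_le_card hins
  have hfin : ∀ i : Fin N, i ∈ Sk N := by
    intro i
    rcases hgrow N with h | h
    · exact h (Finset.mem_univ i)
    · exfalso
      have hcard : (Sk N).card ≤ N := by simpa using Finset.card_le_univ (Sk N)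
      omega
  apply Finset.sup'_le
  intro i _
  have hfi := hfin i
  simp only [hSkdef, Finset.mem_filter, Finset.mem_univ, true_and] at hfi
  exact hfi

end FHA

/-- Asymptotic behavior of the finite-horizon value functions without
discount: if for each horizon `T > 0`, `W T` solves `(d/dt)W_i + H(i,(W_j−W_i)_j) = 0` on
`(−∞,T]` with `W_i(T) = g(i)`, then there is a constant `q_∞`
(namely `q_∞ = inf_{s > 0} max_i (W^s_i(0) − γ s − ξ_i)`, which equals the infimum over
`s ≥ 0` since the maximal deviation is nonincreasing) such that for every `i` and every
fixed `t ≥ 0`, `W^T_i(t) − γ(T − t) → ξ_i + q_∞` as `T → ∞`. -/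
theorem finite_horizon_asymptotics
    (N : ℕ) (hN : 0 < N) (V : Fin N → Finset (Fin N)) (hV : ∀ i, i ∉ V i)
    (hconn : ∀ i j : Fin N, Relation.ReflTransGen (fun a b => b ∈ V a) i j)
    (H : (i : Fin N) → (↥(V i) → ℝ) → ℝ)
    (hlip : ∀ i, LocallyLipschitz (H i))
    (hstrict : ∀ (i : Fin N) (p p' : ↥(V i) → ℝ),
      (∀ j, p' j ≤ p j) → (∃ k, p' k < p k) → H i p' < H i p)
    (g : Fin N → ℝ) (γ : ℝ) (ξ : Fin N → ℝ)
    (hergo : ∀ i, -γ + H i (fun j => ξ j.1 - ξ i) = 0)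
    (W : ℝ → Fin N → ℝ → ℝ)
    (hW : ∀ T : ℝ, 0 < T → ∀ i, ∀ t ∈ Iic T,
      HasDerivWithinAt (W T i)
        (-(H i (fun j => W T j.1 t - W T i t))) (Iic T) t)
    (hWT : ∀ T : ℝ, 0 < T → ∀ i, W T i T = g i) :
    ∃ qinf : ℝ,
      IsGLB (Set.range fun s : Ioi (0 : ℝ) =>
        Finset.univ.sup' ⟨⟨0, hN⟩, Finset.mem_univ _⟩
          (fun i => W s.1 i 0 - γ * s.1 - ξ i)) qinf ∧
      ∀ i, ∀ t ∈ Ici (0 : ℝ),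
        Tendsto (fun T => W T i t - γ * (T - t)) atTop (𝓝 (ξ i + qinf)) := by
  classical
  have hne : (Finset.univ : Finset (Fin N)).Nonempty := ⟨⟨0, hN⟩, Finset.mem_univ _⟩
  have hmono : ∀ (i : Fin N) (p p' : ↥(V i) → ℝ), (∀ j, p' j ≤ p j) → H i p' ≤ H i p := by
    intro i p p' h
    by_cases he : p' = p
    · rw [he]
    · refine (hstrict i p p' h ?_).le
      by_contra hc
      push_neg at hc
      exact he (funext fun j => le_antisymm (h j) (hc j))
  set u : Fin N → ℝ → ℝ := fun i t => W 1 i t - γ * (1 - t) - ξ i with hudef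
  set M : ℝ → ℝ := fun t => Finset.univ.sup' hne fun i => u i t with hMdef
  set Mm : ℝ → ℝ := fun t => Finset.univ.sup' hne fun i => -(u i t) with hMmdef
  have hsol1 := hW 1 one_pos
  have hXsol : ∀ d : ℝ, ∀ i : Fin N, ∀ t ∈ Iic d,
      HasDerivWithinAt (fun s => ξ i + γ * (1 - s) + 0)
        (-(H i fun j : ↥(V i) => (ξ j.1 + γ * (1 - t) + 0) - (ξ i + γ * (1 - t) + 0)))
        (Iic d) t :=
    fun d => FHA.sol_xi hergo d 1 0
  -- monotonicity of the max
  have hMmono : ∀ t1 t2 : ℝ, t1 ≤ t2 → t2 ≤ 1 → M t1 ≤ M t2 := by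
    intro t1 t2 h12 h21
    have hY := FHA.sol_restrict h21 hsol1
    have hZ := hXsol t2
    have hc := FHA.comp hne hmono hY hZ h12
    have he : ∀ t : ℝ, (Finset.univ.sup' hne fun i => W 1 i t - (ξ i + γ * (1 - t) + 0)) = M t := by
      intro t
      apply Finset.sup'_congr hne rfl
      intro i _
      simp only [hudef]
      ring
    rw [he t1, he t2] at hc
    exact hc
  -- antitonicity of (-min)
  have hMmanti : ∀ t1 t2 : ℝ, t1 ≤ t2 → t2 ≤ 1 → Mm t1 ≤ Mm t2 := by
    intro t1 t2 h12 h21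
    have hZ := FHA.sol_restrict h21 hsol1
    have hY := hXsol t2
    have hc := FHA.comp hne hmono hY hZ h12
    have he : ∀ t : ℝ, (Finset.univ.sup' hne fun i => (ξ i + γ * (1 - t) + 0) - W 1 i t) = Mm t := by
      intro t
      apply Finset.sup'_congr hne rfl
      intro i _
      simp only [hudef]
      ring
    rw [he t1, he t2] at hc
    exact hc
  -- box bounds
  have hle_sup : ∀ (i : Fin N) (t : ℝ), u i t ≤ M t :=
    fun i t => Finset.le_sup' (fun i => u i t) (Finset.mem_univ i)
  have hle_supm : ∀ (i : Fin N) (t : ℝ), -(u i t) ≤ Mm t :=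
    fun i t => Finset.le_sup' (fun i => -(u i t)) (Finset.mem_univ i)
  have hbox : ∀ i : Fin N, ∀ t ∈ Iic 1, u i t ∈ Icc (-(Mm 1)) (M 1) := by
    intro i t ht
    constructor
    · have h1 := hle_supm i t
      have h2 := hMmanti t 1 ht le_rfl
      linarith
    · exact le_trans (hle_sup i t) (hMmono t 1 ht le_rfl)
  -- transfer between horizons
  have htrans : ∀ s : ℝ, 0 < s → ∀ t ≤ s, ∀ i : Fin N, W s i t = W 1 i (t + 1 - s) := by
    intro s hs t ht i
    have hYs := hW s hs
    have hZ0 := FHA.sol_shift hsol1 (s - 1)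
    have hs1 : (1:ℝ) + (s - 1) = s := by ring
    rw [hs1] at hZ0
    have hc1 := FHA.comp hne hmono hYs hZ0 ht
    have hc2 := FHA.comp hne hmono hZ0 hYs ht
    have hss1 : s - (s - 1) = 1 := by ring
    have hz1 : (Finset.univ.sup' hne fun i => W s i s - W 1 i (s - (s - 1))) =
        Finset.univ.sup' hne (fun _ => (0:ℝ)) := by
      apply Finset.sup'_congr hne rfl
      intro i _
      rw [hss1, hWT s hs, hWT 1 one_pos, sub_self]
    have hz2 : (Finset.univ.sup' hne fun i => W 1 i (s - (s - 1)) - W s i s) =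
        Finset.univ.sup' hne (fun _ => (0:ℝ)) := by
      apply Finset.sup'_congr hne rfl
      intro i _
      rw [hss1, hWT s hs, hWT 1 one_pos, sub_self]
    rw [hz1, Finset.sup'_const] at hc1
    rw [hz2, Finset.sup'_const] at hc2
    have h1 : W s i t - W 1 i (t - (s - 1)) ≤ 0 :=
      le_trans (Finset.le_sup' (fun i => W s i t - W 1 i (t - (s-1))) (Finset.mem_univ i)) hc1
    have h2 : W 1 i (t - (s - 1)) - W s i t ≤ 0 :=
      le_trans (Finset.le_sup' (fun i => W 1 i (t - (s-1)) - W s i t) (Finset.mem_univ i)) hc2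
    have h3 : t - (s - 1) = t + 1 - s := by ring
    rw [← h3]
    linarith
  -- derivative of u
  have hu' : ∀ i : Fin N, ∀ t ∈ Iic (1:ℝ), HasDerivWithinAt (u i)
      (γ - H i fun j : ↥(V i) => u j.1 t - u i t + (ξ j.1 - ξ i)) (Iic 1) t := by
    intro i t ht
    have h2 : HasDerivWithinAt (fun r : ℝ => γ * (1 - r) + ξ i) (-γ) (Iic 1) t := by
      have h0 := (((hasDerivWithinAt_id t (Iic (1:ℝ))).const_sub (1:ℝ)).const_mul γ).add_const (ξ i)
      simpa using h0
    have h3 := (hsol1 i t ht).sub h2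
    have harg : (fun j : ↥(V i) => W 1 j.1 t - W 1 i t) =
        (fun j : ↥(V i) => u j.1 t - u i t + (ξ j.1 - ξ i)) := by
      funext j; simp only [hudef]; ring
    rw [harg] at h3
    have hfun : u i = fun r => W 1 i r - (γ * (1 - r) + ξ i) := by
      funext r; simp only [hudef]; ring
    have h4 : HasDerivWithinAt (u i)
        ((-(H i fun j : ↥(V i) => u j.1 t - u i t + (ξ j.1 - ξ i))) - -γ) (Iic 1) t :=
      h3.congr (fun r _ => congrFun hfun r) (congrFun hfun t)
    have hval : (γ - H i fun j : ↥(V i) => u j.1 t - u i t + (ξ j.1 - ξ i)) =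
        (-(H i fun j : ↥(V i) => u j.1 t - u i t + (ξ j.1 - ξ i))) - -γ := by ring
    rw [hval]
    exact h4
  -- spread
  set ρ : ℝ → ℝ := fun t => M t + Mm t with hρdef
  have hρ0 : ∀ t : ℝ, 0 ≤ ρ t := by
    intro t
    have h1 := hle_sup ⟨0, hN⟩ t
    have h2 := hle_supm ⟨0, hN⟩ t
    simp only [hρdef]
    linarith
  have hρmono : ∀ t1 t2 : ℝ, t1 ≤ t2 → t2 ≤ 1 → ρ t1 ≤ ρ t2 := by
    intro t1 t2 h12 h21
    have := hMmono t1 t2 h12 h21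
    have := hMmanti t1 t2 h12 h21
    simp only [hρdef]
    linarith
  have hρbdd : BddBelow (ρ '' Iic 1) := ⟨0, by rintro x ⟨t, -, rfl⟩; exact hρ0 t⟩
  have hρne : (ρ '' Iic 1).Nonempty := ⟨ρ 1, 1, self_mem_Iic, rfl⟩
  have hρinf : sInf (ρ '' Iic 1) ≤ 0 := by
    by_contra hpos
    push_neg at hpos
    obtain ⟨τ, hτ, η, hη, hdecay⟩ := FHA.spread_decay hne hmono hstrict hlip hconn hergo
      hu' hbox hMmono hpos
    have hiter : ∀ n : ℕ, M (1 - n * τ) ≤ M 1 - n * η := by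
      intro n
      induction n with
      | zero => simp
      | succ n ih =>
        have ht0 : 1 - (n:ℝ) * τ ≤ 1 := by
          have : (0:ℝ) ≤ (n:ℝ) * τ := by positivity
          linarith
        obtain ⟨i0, -, hi0⟩ := Finset.exists_mem_eq_sup' hne (fun i => -(u i (1 - (n:ℝ) * τ)))
        have hρge : sInf (ρ '' Iic 1) ≤ ρ (1 - (n:ℝ) * τ) :=
          csInf_le hρbdd ⟨_, ht0, rfl⟩
        have hu_i0 : u i0 (1 - (n:ℝ) * τ) ≤ M (1 - (n:ℝ) * τ) - sInf (ρ '' Iic 1) := by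
          have h1 : Mm (1 - (n:ℝ) * τ) = -(u i0 (1 - (n:ℝ) * τ)) := hi0
          simp only [hρdef] at hρge
          linarith
        have hd := hdecay (1 - (n:ℝ) * τ) ht0 i0 hu_i0
        have harith : 1 - (n:ℝ) * τ - τ = 1 - ((n:ℕ) + 1 : ℕ) * τ := by push_cast; ring
        rw [harith] at hd
        have : ((n:ℕ) + 1 : ℕ) * η = (n:ℝ) * η + η := by push_cast; ring
        push_cast at hd ⊢
        linarith
    obtain ⟨n, hn⟩ := exists_nat_gt ((M 1 - (-(Mm 1))) / η)
    have hn2 : M 1 - (-(Mm 1)) < n * η := by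
      rw [div_lt_iff₀ hη] at hn
      linarith
    have ht0 : 1 - (n:ℝ) * τ ≤ 1 := by
      have : (0:ℝ) ≤ (n:ℝ) * τ := by positivity
      linarith
    have hlow : -(Mm 1) ≤ M (1 - (n:ℝ) * τ) :=
      le_trans (hbox ⟨0, hN⟩ _ ht0).1 (hle_sup ⟨0, hN⟩ _)
    have := hiter n
    linarith
  -- the limit
  set L : ℝ := sInf (Set.range fun s : Ioi (0 : ℝ) =>
    Finset.univ.sup' ⟨⟨0, hN⟩, Finset.mem_univ _⟩
      (fun i => W s.1 i 0 - γ * s.1 - ξ i)) with hLdef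
  have hmseq : ∀ s : ℝ, 0 < s →
      (Finset.univ.sup' hne fun i => W s i 0 - γ * s - ξ i) = M (1 - s) := by
    intro s hs
    apply Finset.sup'_congr hne rfl
    intro i _
    have h1 := htrans s hs 0 hs.le i
    have h2 : (0:ℝ) + 1 - s = 1 - s := by ring
    rw [h2] at h1
    simp only [hudef]
    rw [h1]
    ring
  have hrange : ∀ s : Ioi (0:ℝ),
      (Finset.univ.sup' (⟨⟨0, hN⟩, Finset.mem_univ _⟩ : (Finset.univ : Finset (Fin N)).Nonempty)
        fun i => W s.1 i 0 - γ * s.1 - ξ i) = M (1 - s.1) :=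
    fun s => hmseq s.1 s.2
  have hbddL : BddBelow (Set.range fun s : Ioi (0 : ℝ) =>
      Finset.univ.sup' ⟨⟨0, hN⟩, Finset.mem_univ _⟩
        (fun i => W s.1 i 0 - γ * s.1 - ξ i)) := by
    refine ⟨-(Mm 1), ?_⟩
    rintro x ⟨s, rfl⟩
    simp only [hrange s]
    have hs1 : (1:ℝ) - s.1 ≤ 1 := by have := s.2; simp only [mem_Ioi] at this; linarith
    exact le_trans (hbox ⟨0, hN⟩ _ hs1).1 (hle_sup ⟨0, hN⟩ _)
  have hneL : (Set.range fun s : Ioi (0 : ℝ) =>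
      Finset.univ.sup' ⟨⟨0, hN⟩, Finset.mem_univ _⟩
        (fun i => W s.1 i 0 - γ * s.1 - ξ i)).Nonempty := ⟨_, ⟨⟨1, by simp⟩, rfl⟩⟩
  -- Tendsto M atBot L
  have hMtend : Tendsto M atBot (𝓝 L) := by
    rw [tendsto_order]
    constructor
    · intro x hx
      filter_upwards [eventually_le_atBot (0:ℝ)] with t ht
      have hmem : M t ∈ (Set.range fun s : Ioi (0 : ℝ) =>
          Finset.univ.sup' ⟨⟨0, hN⟩, Finset.mem_univ _⟩
            (fun i => W s.1 i 0 - γ * s.1 - ξ i)) := by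
        refine ⟨⟨1 - t, by simp only [mem_Ioi]; linarith⟩, ?_⟩
        have := hmseq (1 - t) (by linarith)
        simpa using this
      have := csInf_le hbddL hmem
      rw [← hLdef] at this
      linarith
    · intro x hx
      obtain ⟨y, ⟨s0, rfl⟩, hy⟩ := exists_lt_of_csInf_lt hneL (by rw [← hLdef]; exact hx)
      simp only [hrange s0] at hy
      filter_upwards [eventually_le_atBot (1 - s0.1)] with t ht
      have hs01 : (1:ℝ) - s0.1 ≤ 1 := by have := s0.2; simp only [mem_Ioi] at this; linarith
      exact lt_of_le_of_lt (hMmono t (1 - s0.1) ht hs01) hy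
  -- Tendsto ρ atBot 0
  have hρtend : Tendsto ρ atBot (𝓝 0) := by
    rw [tendsto_order]
    constructor
    · intro x hx
      filter_upwards with t
      exact lt_of_lt_of_le hx (hρ0 t)
    · intro x hx
      obtain ⟨y, ⟨t1, ht1, rfl⟩, hy⟩ := exists_lt_of_csInf_lt hρne (lt_of_le_of_lt hρinf hx)
      filter_upwards [eventually_le_atBot t1] with t ht
      exact lt_of_le_of_lt (hρmono t t1 ht ht1) hy
  have hMmtend : Tendsto Mm atBot (𝓝 (-L)) := by
    have h1 : Tendsto (fun t => ρ t - M t) atBot (𝓝 (0 - L)) := hρtend.sub hMtend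
    have h2 : (fun t => ρ t - M t) = Mm := by
      funext t; simp only [hρdef]; ring
    rw [h2] at h1
    simpa using h1
  have hutend : ∀ i : Fin N, Tendsto (fun t => u i t) atBot (𝓝 L) := by
    intro i
    have hg : Tendsto (fun t => -(Mm t)) atBot (𝓝 L) := by
      have := hMmtend.neg
      simpa using this
    refine tendsto_of_tendsto_of_tendsto_of_le_of_le' hg hMtend ?_ ?_
    · filter_upwards with t
      have := hle_supm i t
      linarith
    · filter_upwards with t
      exact hle_sup i t
  refine ⟨L, isGLB_csInf hneL hbddL, ?_⟩
  intro i t ht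
  simp only [mem_Ici] at ht
  have h1 : Tendsto (fun T : ℝ => t + 1 - T) atTop atBot := by
    have h0 : Tendsto (fun T : ℝ => -T + (t + 1)) atTop atBot :=
      tendsto_atBot_add_const_right _ (t + 1) tendsto_neg_atTop_atBot
    exact h0.congr (fun T => by ring)
  have h2 : Tendsto (fun T : ℝ => ξ i + u i (t + 1 - T)) atTop (𝓝 (ξ i + L)) :=
    ((hutend i).comp h1).const_add (ξ i)
  refine Tendsto.congr' ?_ h2
  filter_upwards [eventually_ge_atTop (t + 1)] with T hT
  have hT0 : 0 < T := by linarith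
  have htT : t ≤ T := by linarith
  have h3 := htrans T hT0 t htT i
  simp only [hudef]
  rw [← h3]
  ring
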